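/- Let h, h' : {0,...,k} → ℝ be defined by h(i) = |B_i| − |E_i| and h'(i) = |B'_i| − |E'_i| for prefix/suffix arcs of B and E in a minimal-triple partition with p(V) < |V|/2. Then h and h' are nonnegative. Moreover, with i maximal such that h(i) ≤ 3b/8 − e/2 and i' maximal such that h'(i') ≤ 3b/8 − e/2 (assuming 3b/8 − e/2 > 0), if i + i' > k then the middle arc E² = E_i \ E_{k−i'+1} satisfies |E²| ≥ b/4, and hence min{|E¹|, |E³|} ≤ (e − b/4)/2 where E¹ = E_{k−i'+1} and E³ = E'_{k−i+1}. -/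

import Mathlib

open Fin.NatCast

/-- The arc of `l` consecutive elements of the circular sequence on `Fin n`
starting at `s`. -/
def arcSet (n : ℕ) [NeZero n] (s : Fin n) (l : ℕ) : Finset (Fin n) :=
  (Finset.range l).image (fun k : ℕ => s + (k : Fin n))

/-- The size (total weight) of the arc of length `l` starting at `s`. -/
def arcSum (n : ℕ) [NeZero n] (V : Fin n → ℝ) (s : Fin n) (l : ℕ) : ℝ :=
  ∑ k ∈ Finset.range l, V (s + (k : Fin n))

/-- Length of a half-circle: `(n+1)/2`. -/
def hcLen (n : ℕ) : ℕ := (n + 1) / 2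

/-- The half-circle (arc of `(n+1)/2` consecutive elements) starting at `s`. -/
def hcSet (n : ℕ) [NeZero n] (s : Fin n) : Finset (Fin n) := arcSet n s (hcLen n)

/-- The size of the half-circle starting at `s`. -/
def hcSum (n : ℕ) [NeZero n] (V : Fin n → ℝ) (s : Fin n) : ℝ := arcSum n V s (hcLen n)

/-- The potential of an element `v`: the minimum size of a half-circle covering `v`. -/
noncomputable def pot (n : ℕ) [NeZero n] (V : Fin n → ℝ) (v : Fin n) : ℝ :=
  sInf {x : ℝ | ∃ s : Fin n, v ∈ hcSet n s ∧ x = hcSum n V s}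

/-- The potential `p(V)` of the circular sequence: the maximum potential of an element. -/
noncomputable def potV (n : ℕ) [NeZero n] (V : Fin n → ℝ) : ℝ :=
  sSup {x : ℝ | ∃ v : Fin n, x = pot n V v}

/-- A minimal covering triple of half-circles: the three half-circles cover everything,
`s1` has minimum size among all half-circles, all three have size at most `p(V)`, and
none of them can be replaced by a half-circle of strictly smaller size keeping the
covering property. -/
def MinTriple (n : ℕ) [NeZero n] (V : Fin n → ℝ) (s1 s2 s3 : Fin n) : Prop :=
  hcSet n s1 ∪ hcSet n s2 ∪ hcSet n s3 = Finset.univ ∧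
  (∀ t, hcSum n V s1 ≤ hcSum n V t) ∧
  hcSum n V s1 ≤ potV n V ∧ hcSum n V s2 ≤ potV n V ∧ hcSum n V s3 ≤ potV n V ∧
  (∀ t, hcSet n t ∪ hcSet n s2 ∪ hcSet n s3 = Finset.univ → hcSum n V s1 ≤ hcSum n V t) ∧
  (∀ t, hcSet n s1 ∪ hcSet n t ∪ hcSet n s3 = Finset.univ → hcSum n V s2 ≤ hcSum n V t) ∧
  (∀ t, hcSet n s1 ∪ hcSet n s2 ∪ hcSet n t = Finset.univ → hcSum n V s3 ≤ hcSum n V t)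

/-- The partition of the circular sequence into six consecutive arcs `A,…,F`
(of lengths `lA,…,lF`, starting at `s0`) such that the half-circles of the triple
`(s1,s2,s3)` are `ABC`, `CDE` and `EFA`. -/
def TriplePartition (n : ℕ) [NeZero n] (s1 s2 s3 s0 : Fin n)
    (lA lB lC lD lE lF : ℕ) : Prop :=
  lA + lB + lC + lD + lE + lF = n ∧
  lA = lD + 1 ∧ lC = lF + 1 ∧ lE = lB + 1 ∧ 2 ≤ lA ∧ 2 ≤ lC ∧ 2 ≤ lE ∧
  hcSet n s1 = arcSet n s0 (lA + lB + lC) ∧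
  hcSet n s2 = arcSet n (s0 + ((lA + lB : ℕ) : Fin n)) (lC + lD + lE) ∧
  hcSet n s3 = arcSet n (s0 + ((lA + lB + lC + lD : ℕ) : Fin n)) (lE + lF + lA)

/-!
Minimality of the covering triple does all the work. Sliding the half-circle `EFA` forward by
`i` positions, or `CDE` backward by `i`, keeps the three half-circles covering the circle, and
the slide exchanges `E_i` for `B_i`, resp. `B'_i` for `E'_i`; so neither half-circle can get
smaller, i.e. `h, h' ≥ 0`. The middle-arc estimate is then arithmetic.
-/

namespace CircularArc

variable {n : ℕ} [NeZero n] (V : Fin n → ℝ)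

lemma add_natCast_add (s : Fin n) (a c : ℕ) :
    s + (a : Fin n) + (c : Fin n) = s + ((a + c : ℕ) : Fin n) := by
  rw [Nat.cast_add, add_assoc]

lemma natCast_add_self (a : ℕ) : ((a + n : ℕ) : Fin n) = (a : Fin n) := by
  rw [Nat.cast_add, Fin.natCast_self, add_zero]

lemma hcLen_le : hcLen n ≤ n := by
  have := NeZero.pos n
  unfold hcLen
  omega

lemma arcSum_add (s : Fin n) (a c : ℕ) :
    arcSum n V s (a + c) = arcSum n V s a + arcSum n V (s + a) c := by
  simp only [arcSum, Finset.sum_range_add, Nat.cast_add, add_assoc]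

lemma arcSum_add_arcSum_shift (s : Fin n) (i l : ℕ) :
    arcSum n V s i + arcSum n V (s + i) l = arcSum n V s l + arcSum n V (s + l) i := by
  rw [← arcSum_add, ← arcSum_add, add_comm]

lemma arcSum_mono (hV : ∀ i, 0 ≤ V i) (s : Fin n) : Monotone (arcSum n V s) :=
  fun _ _ hl => Finset.sum_le_sum_of_subset_of_nonneg (Finset.range_subset_range.2 hl)
    fun _ _ _ => hV _

lemma arcSum_eq_sum_arcSet (s : Fin n) {l : ℕ} (hl : l ≤ n) :
    arcSum n V s l = ∑ x ∈ arcSet n s l, V x := by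
  rw [arcSet, Finset.sum_image]
  · rfl
  intro a ha c hc hac
  simp only [Finset.coe_range, Set.mem_Iio] at ha hc
  have := congrArg Fin.val (add_left_cancel hac)
  rwa [Fin.val_cast_of_lt (by omega), Fin.val_cast_of_lt (by omega)] at this

lemma hcSum_eq_arcSum_of_hcSet_eq {s t : Fin n} (h : hcSet n s = arcSet n t (hcLen n)) :
    hcSum n V s = arcSum n V t (hcLen n) := by
  rw [hcSum, arcSum_eq_sum_arcSet V s hcLen_le, arcSum_eq_sum_arcSet V t hcLen_le, ← h, hcSet]

lemma add_natCast_mem_arcSet (s : Fin n) {j m l : ℕ} (hj : j ≤ m) (hm : m < j + l) :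
    s + (m : Fin n) ∈ arcSet n (s + j) l := by
  refine Finset.mem_image.2 ⟨m - j, Finset.mem_range.2 (by omega), ?_⟩
  rw [add_natCast_add, Nat.add_sub_cancel' hj]

lemma exists_eq_add_natCast (s x : Fin n) : ∃ m < n, x = s + (m : Fin n) :=
  ⟨(x - s).val, (x - s).isLt, by rw [Fin.cast_val_eq_self, add_sub_cancel]⟩

lemma arcSet_union_arcSet_union_arcSet_eq_univ (s : Fin n) {j₂ j₃ l₁ l₂ l₃ : ℕ}
    (h₂ : j₂ ≤ l₁) (h₃ : j₃ ≤ j₂ + l₂) (hn : n ≤ j₃ + l₃) :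
    arcSet n s l₁ ∪ arcSet n (s + j₂) l₂ ∪ arcSet n (s + j₃) l₃ = Finset.univ := by
  refine Finset.eq_univ_iff_forall.2 fun x => ?_
  obtain ⟨m, hmn, rfl⟩ := exists_eq_add_natCast s x
  simp only [Finset.mem_union]
  by_cases h₁ : m < l₁
  · left; left
    simpa using add_natCast_mem_arcSet s (Nat.zero_le m) (by omega : m < 0 + l₁)
  by_cases h₂₃ : m < j₃
  · exact Or.inl (Or.inr (add_natCast_mem_arcSet s (by omega) (by omega)))
  · exact Or.inr (add_natCast_mem_arcSet s (by omega) (by omega))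

end CircularArc

open CircularArc

lemma TriplePartition.hcLen_eq {n : ℕ} [NeZero n] {s1 s2 s3 s0 : Fin n}
    {lA lB lC lD lE lF : ℕ} (hTP : TriplePartition n s1 s2 s3 s0 lA lB lC lD lE lF) :
    hcLen n = lA + lB + lC ∧ hcLen n = lC + lD + lE ∧ hcLen n = lE + lF + lA := by
  obtain ⟨hsum, hAD, hCF, hEB, -⟩ := hTP
  unfold hcLen
  omega

section MinTriple

variable {n : ℕ} [NeZero n] {V : Fin n → ℝ} {s1 s2 s3 s0 : Fin n} {lA lB lC lD lE lF : ℕ}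

theorem MinTriple.arcSum_prefix_le (hT : MinTriple n V s1 s2 s3)
    (hTP : TriplePartition n s1 s2 s3 s0 lA lB lC lD lE lF) {i : ℕ} (hi : i ≤ lE) :
    arcSum n V (s0 + ((lA + lB + lC + lD : ℕ) : Fin n)) i ≤ arcSum n V (s0 + (lA : Fin n)) i := by
  obtain ⟨-, -, -, -, -, -, -, hmin⟩ := hT
  obtain ⟨-, -, hL₃⟩ := hTP.hcLen_eq
  obtain ⟨hsum, -, -, -, -, -, -, hS1, hS2, hS3⟩ := hTP
  set sE := s0 + ((lA + lB + lC + lD : ℕ) : Fin n)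
  have hcov : hcSet n s1 ∪ hcSet n s2 ∪ hcSet n (sE + i) = Finset.univ := by
    rw [hS1, hS2, hcSet, add_natCast_add]
    exact arcSet_union_arcSet_union_arcSet_eq_univ s0 (by omega) (by omega) (by omega)
  have hwrap : sE + (hcLen n : Fin n) = s0 + (lA : Fin n) := by
    rw [add_natCast_add, ← natCast_add_self lA]
    congr 2
    omega
  have hslide := arcSum_add_arcSum_shift V sE i (hcLen n)
  have hs3 : hcSum n V s3 = arcSum n V sE (hcLen n) := by
    rw [hcSum_eq_arcSum_of_hcSet_eq V (hL₃ ▸ hS3)]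
  rw [hwrap] at hslide
  have := hmin _ hcov
  rw [hs3, hcSum] at this
  linarith

theorem MinTriple.arcSum_suffix_le (hT : MinTriple n V s1 s2 s3)
    (hTP : TriplePartition n s1 s2 s3 s0 lA lB lC lD lE lF) {i : ℕ} (hi : i ≤ lB) :
    arcSum n V (s0 + ((lA + lB + lC + lD + (lE - i) : ℕ) : Fin n)) i
      ≤ arcSum n V (s0 + ((lA + (lB - i) : ℕ) : Fin n)) i := by
  obtain ⟨-, -, -, -, -, -, hmin, -⟩ := hT
  obtain ⟨-, hL₂, -⟩ := hTP.hcLen_eq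
  obtain ⟨hsum, -, -, hEB, -, -, -, hS1, hS2, hS3⟩ := hTP
  set t := s0 + ((lA + (lB - i) : ℕ) : Fin n)
  have hcov : hcSet n s1 ∪ hcSet n t ∪ hcSet n s3 = Finset.univ := by
    rw [hS1, hS3, hcSet]
    exact arcSet_union_arcSet_union_arcSet_eq_univ s0 (by omega) (by omega) (by omega)
  have hstart : t + (i : Fin n) = s0 + ((lA + lB : ℕ) : Fin n) := by
    rw [add_natCast_add]
    congr 2
    omega
  have hend : t + (hcLen n : Fin n) = s0 + ((lA + lB + lC + lD + (lE - i) : ℕ) : Fin n) := by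
    rw [add_natCast_add]
    congr 2
    omega
  have hslide := arcSum_add_arcSum_shift V t i (hcLen n)
  have hs2 : hcSum n V s2 = arcSum n V (s0 + ((lA + lB : ℕ) : Fin n)) (hcLen n) := by
    rw [hcSum_eq_arcSum_of_hcSet_eq V (hL₂ ▸ hS2)]
  rw [hstart, hend] at hslide
  have := hmin _ hcov
  rw [hs2, hcSum] at this
  linarith

end MinTriple

/-- Since `k < i + i'`, the arcs `B_i` and `B'_{i'}` overlap, so `|B_i| + |B'_{i'}| ≥ b`; adding
the two threshold inequalities then gives `|E²| ≥ (b - e) - 2(3b/8 - e/2) = b/4`. -/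
lemma div_four_le_middle_of_overlap {sB sE : ℕ → ℝ} (hsB : Monotone sB) {k i i' : ℕ}
    {b e : ℝ} (hi' : i' ≤ k) (hii : k < i + i')
    (hh : sB i - sE i ≤ 3*b/8 - e/2)
    (hh' : (b - sB (k - i')) - (e - sE (k + 1 - i')) ≤ 3*b/8 - e/2) :
    b/4 ≤ sE i - sE (k - i' + 1) := by
  have hB : sB (k - i') ≤ sB i := hsB (by omega)
  rw [show k + 1 - i' = k - i' + 1 by omega] at hh'
  linarith

theorem prefix_difference_functions_general (n : ℕ) [NeZero n]
    (V : Fin n → ℝ) (hV : ∀ i, 0 ≤ V i)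
    (s1 s2 s3 s0 : Fin n) (lA lB lC lD lE lF : ℕ)
    (hT : MinTriple n V s1 s2 s3)
    (hTP : TriplePartition n s1 s2 s3 s0 lA lB lC lD lE lF)
    (sB sE : ℕ → ℝ)
    (hsB : ∀ t, sB t = arcSum n V (s0 + ((lA : ℕ) : Fin n)) t)
    (hsE : ∀ t, sE t = arcSum n V (s0 + ((lA + lB + lC + lD : ℕ) : Fin n)) t)
    (b e : ℝ) (hb : b = sB lB) (he : e = sE (lB + 1)) :
    (∀ i ≤ lB, 0 ≤ sB i - sE i) ∧
    (∀ i ≤ lB, 0 ≤ (b - sB (lB - i)) - (e - sE (lB + 1 - i))) ∧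
    (0 < 3*b/8 - e/2 → ∀ i i' : ℕ, i ≤ lB → i' ≤ lB →
      sB i - sE i ≤ 3*b/8 - e/2 →
      (∀ j ≤ lB, sB j - sE j ≤ 3*b/8 - e/2 → j ≤ i) →
      (b - sB (lB - i')) - (e - sE (lB + 1 - i')) ≤ 3*b/8 - e/2 →
      (∀ j ≤ lB, (b - sB (lB - j)) - (e - sE (lB + 1 - j)) ≤ 3*b/8 - e/2 → j ≤ i') →
      lB < i + i' →
      b/4 ≤ sE i - sE (lB - i' + 1) ∧
      min (sE (lB - i' + 1)) (e - sE i) ≤ (e - b/4) / 2) := by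
  have hE : lE = lB + 1 := hTP.2.2.2.1
  refine ⟨fun i hi => ?_, fun i hi => ?_, fun _ i i' _ hi' hh _ hh' _ hii => ?_⟩
  · rw [hsB, hsE]
    linarith [hT.arcSum_prefix_le hTP (i := i) (by omega)]
  · have hBsplit := arcSum_add V (s0 + (lA : Fin n)) (lB - i) i
    have hEsplit := arcSum_add V (s0 + ((lA + lB + lC + lD : ℕ) : Fin n)) (lE - i) i
    rw [Nat.sub_add_cancel hi, add_natCast_add] at hBsplit
    rw [Nat.sub_add_cancel (by omega), add_natCast_add] at hEsplit
    rw [hb, he, hsB, hsB, hsE, hsE, ← hE]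
    linarith [hT.arcSum_suffix_le hTP hi]
  · have hsBmono : Monotone sB := by
      simpa only [funext hsB] using arcSum_mono V hV _
    have hmid := div_four_le_middle_of_overlap hsBmono hi' hii hh hh'
    refine ⟨hmid, ?_⟩
    linarith [min_le_left (sE (lB - i' + 1)) (e - sE i),
      min_le_right (sE (lB - i' + 1)) (e - sE i)]

/-- nonnegativity of the prefix/suffix difference functions
`h(i) = |B_i| - |E_i|`, `h\'(i) = |B\'_i| - |E\'_i|`, and the middle-arc estimate
in Case 2 of the proof of the `3b/8 + e/2` one-jump strategy. -/
theorem prefix_difference_functions (n : ℕ) (hn : Odd n) [NeZero n]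
    (V : Fin n → ℝ) (hV : ∀ i, 0 ≤ V i)
    (hp : potV n V < (∑ i, V i) / 2)
    (s1 s2 s3 s0 : Fin n) (lA lB lC lD lE lF : ℕ)
    (hT : MinTriple n V s1 s2 s3)
    (hTP : TriplePartition n s1 s2 s3 s0 lA lB lC lD lE lF)
    (sB sE : ℕ → ℝ)
    (hsB : ∀ t, sB t = arcSum n V (s0 + ((lA : ℕ) : Fin n)) t)
    (hsE : ∀ t, sE t = arcSum n V (s0 + ((lA + lB + lC + lD : ℕ) : Fin n)) t)
    (b e : ℝ) (hb : b = sB lB) (he : e = sE (lB + 1)) :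
    (∀ i ≤ lB, 0 ≤ sB i - sE i) ∧
    (∀ i ≤ lB, 0 ≤ (b - sB (lB - i)) - (e - sE (lB + 1 - i))) ∧
    (0 < 3*b/8 - e/2 → ∀ i i' : ℕ, i ≤ lB → i' ≤ lB →
      sB i - sE i ≤ 3*b/8 - e/2 →
      (∀ j ≤ lB, sB j - sE j ≤ 3*b/8 - e/2 → j ≤ i) →
      (b - sB (lB - i')) - (e - sE (lB + 1 - i')) ≤ 3*b/8 - e/2 →
      (∀ j ≤ lB, (b - sB (lB - j)) - (e - sE (lB + 1 - j)) ≤ 3*b/8 - e/2 → j ≤ i') →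
      lB < i + i' →
      b/4 ≤ sE i - sE (lB - i' + 1) ∧
      min (sE (lB - i' + 1)) (e - sE i) ≤ (e - b/4) / 2) :=
  prefix_difference_functions_general n V hV s1 s2 s3 s0 lA lB lC lD lE lF hT hTP sB sE hsB hsE b e
    hb he
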